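/- arXiv:2604.23591 — 2 statements merged into one kernel-verified Lean document; each statement's English description precedes it below -/
import Mathlib

section
/- Let $v_1,\ldots,v_d$ be a basis of $\mathbb{R}^d$ with dual basis $v_1^\ast,\ldots,v_d^\ast$ (so $(v_j^\ast, v_k) = \delta_{jk}$). Fix $i$ and a vector $w$ in the cone generated by $v_1,\ldots,v_d$ with $(v_i^\ast, w) > 0$. Let $L = \{l \neq i : (v_l^\ast, w) = 0\}$ and $R = \{r \neq i : (v_r^\ast, w) \neq 0\}$. For $j \in R \cup \{i\}$ set $u_j = v_j^\ast/(v_j^\ast, w)$, and for $l \in L$ set $u_l = v_l^\ast$. Let $\delta_i$ be the cone generated by $v_1,\ldots,v_{i-1},-w,v_{i+1},\ldots,v_d$. Then the dual cone $\delta_i^\vee = \{a : (a,x) \geq 0 \text{ for all } x \in \delta_i\}$ equals the cone generated by $-u_i$, the $u_l$ for $l \in L$, and the vectors $u_r - u_i$ for $r \in R$. -/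
/-- Standard pairing on `ℝ^d`. -/
def dot {d : ℕ} (x y : Fin d → ℝ) : ℝ := ∑ i, x i * y i

/-- The cone generated by a set: all finite nonnegative combinations. -/
def coneOf {d : ℕ} (S : Set (Fin d → ℝ)) : Set (Fin d → ℝ) :=
  {x | ∃ (n : ℕ) (c : Fin n → ℝ) (y : Fin n → (Fin d → ℝ)),
    (∀ j, 0 ≤ c j) ∧ (∀ j, y j ∈ S) ∧ x = ∑ j, c j • y j}

/-- The dual cone of a set. -/
def dualCone {d : ℕ} (S : Set (Fin d → ℝ)) : Set (Fin d → ℝ) :=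
  {a | ∀ x ∈ S, 0 ≤ dot a x}

/-!
`δ_i` is simplicial: it is generated by the basis `v_k` (`k ≠ i`), `-w`. The dual of a
simplicial cone is generated by the dual basis, and the dual basis of this one is, up to
positive factors, `-u_i`, `u_l` (`l ∈ L`) and `u_r - u_i` (`r ∈ R`): each of these pairs to
zero with all but one generator of `δ_i`, and positively with that one, because
`(v_r^*, w) ≥ 0` for `w` in the cone of the `v_k`.
-/

open Matrix

section Cones

variable {d : ℕ}

lemma dot_eq_dotProduct (x y : Fin d → ℝ) : dot x y = x ⬝ᵥ y := rfl

lemma dot_neg_left (x y : Fin d → ℝ) : dot (-x) y = -dot x y := neg_dotProduct x y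

lemma dot_neg_right (x y : Fin d → ℝ) : dot x (-y) = -dot x y := dotProduct_neg x y

lemma dot_sub_left (x y z : Fin d → ℝ) : dot (x - y) z = dot x z - dot y z :=
  sub_dotProduct x y z

lemma dot_smul_left (c : ℝ) (x y : Fin d → ℝ) : dot (c • x) y = c * dot x y :=
  smul_dotProduct c x y

lemma mem_dualCone_coneOf_iff {S : Set (Fin d → ℝ)} {a : Fin d → ℝ} :
    a ∈ dualCone (coneOf S) ↔ ∀ s ∈ S, 0 ≤ dot a s := by
  constructor
  · intro h s hs
    exact h s ⟨1, fun _ => 1, fun _ => s, fun _ => zero_le_one, fun _ => hs, by simp⟩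
  · rintro h x ⟨n, c, y, hc, hy, rfl⟩
    simp only [dot_eq_dotProduct, dotProduct_sum, dotProduct_smul, smul_eq_mul] at h ⊢
    exact Finset.sum_nonneg fun j _ => mul_nonneg (hc j) (h _ (hy j))

lemma coneOf_subset_dualCone_coneOf {S T : Set (Fin d → ℝ)}
    (h : ∀ s ∈ S, ∀ t ∈ T, 0 ≤ dot s t) : coneOf S ⊆ dualCone (coneOf T) := by
  intro x hx
  refine mem_dualCone_coneOf_iff.2 fun t ht => ?_
  have ht' : t ∈ dualCone (coneOf S) :=
    mem_dualCone_coneOf_iff.2 fun s hs => by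
      rw [dot_eq_dotProduct, dotProduct_comm]; exact h s hs t ht
  rw [dot_eq_dotProduct, dotProduct_comm]
  exact ht' x hx

lemma sum_dot_smul_eq_of_biorthogonal {b bstar : Fin d → Fin d → ℝ}
    (h : ∀ j k, dot (bstar j) (b k) = if j = k then 1 else 0) (x : Fin d → ℝ) :
    ∑ k, dot x (b k) • bstar k = x := by
  have hBB : of bstar * (of b)ᵀ = 1 := by
    ext j k
    simpa [mul_apply, one_apply, dot] using h j k
  calc ∑ k, dot x (b k) • bstar k = (of b *ᵥ x) ᵥ* of bstar := by
        simp only [vecMul_eq_sum, mulVec, of_apply, dot_eq_dotProduct, dotProduct_comm]; rfl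
    _ = x ᵥ* ((of b)ᵀ * of bstar) := by rw [← vecMul_transpose, vecMul_vecMul]
    _ = x := by rw [mul_eq_one_comm.mp hBB, vecMul_one]

theorem dualCone_coneOf_range_eq {b g : Fin d → Fin d → ℝ}
    (hoff : ∀ j k, j ≠ k → dot (g j) (b k) = 0) (hdiag : ∀ j, 0 < dot (g j) (b j)) :
    dualCone (coneOf (Set.range b)) = coneOf (Set.range g) := by
  refine subset_antisymm (fun a ha => ?_) (coneOf_subset_dualCone_coneOf ?_)
  · have hbiorth : ∀ j k, dot ((dot (g j) (b j))⁻¹ • g j) (b k) = if j = k then 1 else 0 := by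
      intro j k
      rw [dot_smul_left]
      split_ifs with hjk
      · subst hjk; exact inv_mul_cancel₀ (hdiag j).ne'
      · rw [hoff j k hjk, mul_zero]
    refine ⟨d, fun k => dot a (b k) * (dot (g k) (b k))⁻¹, g,
      fun k => mul_nonneg (mem_dualCone_coneOf_iff.1 ha _ ⟨k, rfl⟩) (inv_nonneg.2 (hdiag k).le),
      fun k => ⟨k, rfl⟩, ?_⟩
    simp_rw [mul_smul]
    exact (sum_dot_smul_eq_of_biorthogonal hbiorth a).symm
  · rintro _ ⟨j, rfl⟩ _ ⟨k, rfl⟩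
    rcases eq_or_ne j k with rfl | hjk
    · exact (hdiag j).le
    · exact (hoff j k hjk).ge

end Cones

section FlippedSimplicialCone

variable {d : ℕ} {v vstar u : Fin d → Fin d → ℝ} {w : Fin d → ℝ} {i : Fin d}

noncomputable def dualGen (vstar u : Fin d → Fin d → ℝ) (w : Fin d → ℝ) (i k : Fin d) :
    Fin d → ℝ :=
  if k = i then -u i else if dot (vstar k) w = 0 then u k else u k - u i

lemma range_dualGen : Set.range (dualGen vstar u w i) = insert (-(u i))
    ((u '' {l | l ≠ i ∧ dot (vstar l) w = 0}) ∪
      ((fun r => u r - u i) '' {r | r ≠ i ∧ dot (vstar r) w ≠ 0})) := by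
  ext x
  constructor
  · rintro ⟨k, rfl⟩
    unfold dualGen
    split_ifs with hki hk0
    · exact Set.mem_insert _ _
    · exact Set.mem_insert_of_mem _ (Or.inl ⟨k, ⟨hki, hk0⟩, rfl⟩)
    · exact Set.mem_insert_of_mem _ (Or.inr ⟨k, ⟨hki, hk0⟩, rfl⟩)
  · rintro (rfl | ⟨l, ⟨hli, hl0⟩, rfl⟩ | ⟨r, ⟨hri, hr0⟩, rfl⟩)
    · exact ⟨i, if_pos rfl⟩
    · exact ⟨l, by simp [dualGen, hli, hl0]⟩
    · exact ⟨r, by simp [dualGen, hri, hr0]⟩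

lemma dot_u_w
    (hu : ∀ j, u j = if dot (vstar j) w = 0 then vstar j else (dot (vstar j) w)⁻¹ • vstar j)
    (j : Fin d) : dot (u j) w = if dot (vstar j) w = 0 then 0 else 1 := by
  rw [hu j]
  split_ifs with h
  · exact h
  · rw [dot_smul_left, inv_mul_cancel₀ h]

lemma dot_u_v_of_ne (hdual : ∀ j k, dot (vstar j) (v k) = if j = k then 1 else 0)
    (hu : ∀ j, u j = if dot (vstar j) w = 0 then vstar j else (dot (vstar j) w)⁻¹ • vstar j)
    {j k : Fin d} (hjk : j ≠ k) : dot (u j) (v k) = 0 := by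
  rw [hu j]
  split_ifs <;> simp [dot_smul_left, hdual, hjk]

lemma dot_u_v_self_pos (hdual : ∀ j k, dot (vstar j) (v k) = if j = k then 1 else 0)
    (hu : ∀ j, u j = if dot (vstar j) w = 0 then vstar j else (dot (vstar j) w)⁻¹ • vstar j)
    (hw : ∀ k, 0 ≤ dot (vstar k) w) (j : Fin d) : 0 < dot (u j) (v j) := by
  rw [hu j]
  split_ifs with h
  · simp [hdual]
  · simpa [dot_smul_left, hdual] using (hw j).lt_of_ne' h

lemma dot_dualGen_update_of_ne (hdual : ∀ j k, dot (vstar j) (v k) = if j = k then 1 else 0)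
    (hu : ∀ j, u j = if dot (vstar j) w = 0 then vstar j else (dot (vstar j) w)⁻¹ • vstar j)
    (hwi : dot (vstar i) w ≠ 0) (j k : Fin d) (hjk : j ≠ k) :
    dot (dualGen vstar u w i j) (Function.update v i (-w) k) = 0 := by
  rcases eq_or_ne k i with rfl | hki
  · rw [Function.update_self, dot_neg_right, neg_eq_zero]
    unfold dualGen
    rw [if_neg hjk]
    split_ifs with h0
    · rw [dot_u_w hu, if_pos h0]
    · rw [dot_sub_left, dot_u_w hu, dot_u_w hu, if_neg h0, if_neg hwi, sub_self]
  · rw [Function.update_of_ne hki]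
    unfold dualGen
    split_ifs
    · rw [dot_neg_left, dot_u_v_of_ne hdual hu hki.symm, neg_zero]
    · exact dot_u_v_of_ne hdual hu hjk
    · rw [dot_sub_left, dot_u_v_of_ne hdual hu hjk, dot_u_v_of_ne hdual hu hki.symm, sub_self]

lemma dot_dualGen_update_self_pos (hdual : ∀ j k, dot (vstar j) (v k) = if j = k then 1 else 0)
    (hu : ∀ j, u j = if dot (vstar j) w = 0 then vstar j else (dot (vstar j) w)⁻¹ • vstar j)
    (hwi : 0 < dot (vstar i) w)
    (hw : ∀ k, 0 ≤ dot (vstar k) w) (j : Fin d) :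
    0 < dot (dualGen vstar u w i j) (Function.update v i (-w) j) := by
  unfold dualGen
  split_ifs with hji
  · subst hji
    rw [Function.update_self, dot_neg_left, dot_neg_right, neg_neg, dot_u_w hu,
      if_neg hwi.ne']
    exact one_pos
  · rw [Function.update_of_ne hji]
    exact dot_u_v_self_pos hdual hu hw j
  · rw [Function.update_of_ne hji, dot_sub_left, dot_u_v_of_ne hdual hu (Ne.symm hji), sub_zero]
    exact dot_u_v_self_pos hdual hu hw j

end FlippedSimplicialCone

theorem stmt_1 {d : ℕ} (v vstar : Fin d → (Fin d → ℝ))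
    (hdual : ∀ j k, dot (vstar j) (v k) = if j = k then 1 else 0)
    (i : Fin d) (w : Fin d → ℝ) (hw : w ∈ coneOf (Set.range v))
    (hwi : 0 < dot (vstar i) w)
    (u : Fin d → (Fin d → ℝ))
    (hu : ∀ j, u j = if dot (vstar j) w = 0 then vstar j
      else (dot (vstar j) w)⁻¹ • vstar j) :
    dualCone (coneOf (Set.range (Function.update v i (-w)))) =
      coneOf (insert (-(u i))
        ((u '' {l | l ≠ i ∧ dot (vstar l) w = 0}) ∪
          ((fun r => u r - u i) '' {r | r ≠ i ∧ dot (vstar r) w ≠ 0}))) := by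
  have hw_nonneg : ∀ k, 0 ≤ dot (vstar k) w := fun k =>
    mem_dualCone_coneOf_iff.2 (by rintro _ ⟨j, rfl⟩; rw [hdual]; split_ifs <;> norm_num) w hw
  rw [← range_dualGen]
  exact dualCone_coneOf_range_eq (dot_dualGen_update_of_ne hdual hu hwi.ne')
    (dot_dualGen_update_self_pos hdual hu hwi hw_nonneg)
end

section
/- Let $\sigma \subset \mathbb{R}^3$ be the cone generated by $v_1 = (1,0,0)$, $v_2 = (0,1,0)$, $v_3 = (1,p,q)$ where $1 \leq p < q$ and $\gcd(p,q) = 1$, and let $N = \mathbb{Z}^3$. For $1 \leq k \leq q-1$ define $m_k = \min\{l \in \mathbb{Z}_{>0} : lq > kp\}$. Then the Hilbert basis of the monoid $\sigma \cap N$ (i.e., its unique minimal generating set) equals $\{v_1, v_2, v_3\} \cup \{(1, m_k, k) : 1 \leq k \leq q-1\}$. -/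
/-- Membership of an integral point in the cone generated by
`(1,0,0), (0,1,0), (1,p,q)`. -/
def inSigma (p q : ℤ) (x : Fin 3 → ℤ) : Prop :=
  (fun i => (x i : ℝ)) ∈
    coneOf {![1, 0, 0], ![0, 1, 0], ![1, (p : ℝ), (q : ℝ)]}

lemma dot_nonneg_of_mem_dualCone_of_mem_coneOf {d : ℕ} {S : Set (Fin d → ℝ)}
    {a x : Fin d → ℝ} (ha : a ∈ dualCone S) (hx : x ∈ coneOf S) : 0 ≤ dot a x := by
  obtain ⟨n, c, y, hc, hy, rfl⟩ := hx
  change 0 ≤ a ⬝ᵥ ∑ j, c j • y j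
  rw [dotProduct_sum]
  exact Finset.sum_nonneg fun j _ => by
    rw [dotProduct_smul]
    exact smul_nonneg (hc j) (ha _ (hy j))

section Sigma

variable {p q : ℤ}

lemma inSigma_iff (hq : 0 < q) (a b c : ℤ) :
    inSigma p q ![a, b, c] ↔ 0 ≤ c ∧ c ≤ q * a ∧ p * c ≤ q * b := by
  have hq' : (0 : ℝ) < q := by exact_mod_cast hq
  constructor
  · intro hx
    have facet : ∀ u : Fin 3 → ℝ,
        (∀ v ∈ ({![1, 0, 0], ![0, 1, 0], ![1, (p : ℝ), (q : ℝ)]} : Set (Fin 3 → ℝ)),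
          0 ≤ dot u v) → 0 ≤ u 0 * a + u 1 * b + u 2 * c := fun u hu => by
      simpa [dot, Fin.sum_univ_three] using dot_nonneg_of_mem_dualCone_of_mem_coneOf hu hx
    have h₁ := facet ![0, 0, 1] (by
      rintro v (rfl | rfl | rfl) <;> simp [dot, Fin.sum_univ_three, hq.le])
    have h₂ := facet ![(q : ℝ), 0, -1] (by
      rintro v (rfl | rfl | rfl) <;> simp [dot, Fin.sum_univ_three, hq.le])
    have h₃ := facet ![0, (q : ℝ), -(p : ℝ)] (by
      rintro v (rfl | rfl | rfl) <;> simp [dot, Fin.sum_univ_three] <;> linarith)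
    simp only [Matrix.cons_val, zero_mul, one_mul, zero_add, add_zero] at h₁ h₂ h₃
    refine ⟨by exact_mod_cast h₁, ?_, ?_⟩
    · exact_mod_cast (by linarith : (c : ℝ) ≤ q * a)
    · exact_mod_cast (by linarith : (p : ℝ) * c ≤ q * b)
  · rintro ⟨h₁, h₂, h₃⟩
    have h₂' : (c : ℝ) ≤ q * a := by exact_mod_cast h₂
    have h₃' : (p : ℝ) * c ≤ q * b := by exact_mod_cast h₃
    refine ⟨3, ![a - c / q, b - p * c / q, c / q],
      ![![1, 0, 0], ![0, 1, 0], ![1, (p : ℝ), (q : ℝ)]], fun j => ?_, fun j => ?_, ?_⟩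
    · fin_cases j <;> simp only [Fin.zero_eta, Fin.mk_one, Fin.reduceFinMk, Matrix.cons_val,
        Matrix.cons_val_zero, Matrix.cons_val_one, sub_nonneg]
      · rw [div_le_iff₀ hq']; linarith
      · rw [div_le_iff₀ hq']; linarith
      · exact div_nonneg (by exact_mod_cast h₁) hq'.le
    · fin_cases j <;> simp
    · funext i
      fin_cases i <;> simp [Fin.sum_univ_three] <;> field_simp
      ring

lemma inSigma_zero_iff (hq : 0 < q) (b c : ℤ) : inSigma p q ![0, b, c] ↔ c = 0 ∧ 0 ≤ b := by
  rw [inSigma_iff hq]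
  constructor
  · rintro ⟨h₁, h₂, h₃⟩
    obtain rfl : c = 0 := by linarith
    exact ⟨rfl, nonneg_of_mul_nonneg_right (by simpa using h₃) hq⟩
  · rintro ⟨rfl, hb⟩
    exact ⟨le_rfl, by simp, by simpa using mul_nonneg hq.le hb⟩

lemma fst_nonneg_of_inSigma (hq : 0 < q) {a b c : ℤ} (h : inSigma p q ![a, b, c]) : 0 ≤ a := by
  obtain ⟨h₁, h₂, -⟩ := (inSigma_iff hq a b c).1 h
  exact nonneg_of_mul_nonneg_right (h₁.trans h₂) hq

lemma isLeast_inSigma_of_minimal (hp : 0 ≤ p) (hq : 0 < q) (hgcd : Int.gcd p q = 1) {k n : ℤ}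
    (hk₁ : 1 ≤ k) (hk₂ : k ≤ q - 1) (hn : n * q > k * p)
    (hmin : ∀ l : ℤ, 0 < l → l * q > k * p → n ≤ l) :
    IsLeast {b | inSigma p q ![1, b, k]} n := by
  refine ⟨(inSigma_iff hq 1 n k).2 ⟨by omega, by omega, by linarith⟩, fun b hb => ?_⟩
  obtain ⟨-, -, hb⟩ := (inSigma_iff hq 1 b k).1 hb
  have hne : p * k ≠ q * b := fun hpk => by
    have hdvd : q ∣ k := (Int.isCoprime_iff_gcd_eq_one.2 hgcd).symm.dvd_of_dvd_mul_left ⟨b, hpk⟩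
    have := Int.le_of_dvd (by omega) hdvd
    omega
  have hlt : p * k < q * b := lt_of_le_of_ne hb hne
  exact hmin b (pos_of_mul_pos_right ((mul_nonneg hp (by omega)).trans_lt hlt) hq.le)
    (by linarith)

lemma exists_eq_vec3 {α : Type*} (x : Fin 3 → α) : ∃ a b c, x = ![a, b, c] :=
  ⟨x 0, x 1, x 2, (FinVec.etaExpand_eq x).symm⟩

lemma vec3_eq_add_iff {α : Type*} [Add α] {a b c a₁ b₁ c₁ a₂ b₂ c₂ : α} :
    ![a, b, c] = ![a₁, b₁, c₁] + ![a₂, b₂, c₂] ↔ a = a₁ + a₂ ∧ b = b₁ + b₂ ∧ c = c₁ + c₂ := by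
  simp only [Matrix.cons_add_cons, Matrix.empty_add_empty, Matrix.vecCons_inj, and_true]

/-- The irreducible elements of the monoid `σ ∩ ℤ³`, i.e. the elements of its Hilbert basis. -/
def IsSigmaAtom (p q : ℤ) (x : Fin 3 → ℤ) : Prop :=
  inSigma p q x ∧ x ≠ 0 ∧
    ¬∃ y z : Fin 3 → ℤ, (inSigma p q y ∧ y ≠ 0) ∧ (inSigma p q z ∧ z ≠ 0) ∧ x = y + z

lemma IsSigmaAtom.eq_of_inSigma_sub {x v : Fin 3 → ℤ} (hx : IsSigmaAtom p q x)
    (hv : inSigma p q v) (hv₀ : v ≠ 0) (hxv : inSigma p q (x - v)) : x = v := by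
  by_contra hne
  exact hx.2.2 ⟨v, x - v, ⟨hv, hv₀⟩, ⟨hxv, sub_ne_zero.2 hne⟩, (add_sub_cancel v x).symm⟩

lemma IsSigmaAtom.eq_of_isLeast (hq : 0 < q) {a b c B : ℤ} (hx : IsSigmaAtom p q ![a, b, c])
    (ha : 1 ≤ a) (hc : c ≤ q) (hB : IsLeast {b | inSigma p q ![1, b, c]} B) :
    ![a, b, c] = ![1, B, c] := by
  obtain ⟨hc₀, -, hbc⟩ := (inSigma_iff hq a b c).1 hx.1
  have hBb : B ≤ b := hB.2 ((inSigma_iff hq 1 b c).2 ⟨hc₀, by simpa using hc, hbc⟩)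
  refine hx.eq_of_inSigma_sub hB.1 (by simp) ?_
  have hsub : ![a, b, c] - ![1, B, c] = ![a - 1, b - B, 0] := by
    ext i; fin_cases i <;> simp
  rw [hsub, inSigma_iff hq]
  exact ⟨le_rfl, mul_nonneg hq.le (by omega), by simpa using mul_nonneg hq.le (by omega)⟩

lemma isSigmaAtom_of_isLeast (hq : 0 < q) {B C : ℤ}
    (hB : IsLeast {b | inSigma p q ![1, b, C]} B) : IsSigmaAtom p q ![1, B, C] := by
  have no_decomp_fst_zero : ∀ b c a' b' c' : ℤ, inSigma p q ![0, b, c] → ![0, b, c] ≠ 0 →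
      inSigma p q ![a', b', c'] → ![1, B, C] ≠ ![0, b, c] + ![a', b', c'] := by
    intro b c a' b' c' hy hy₀ hz hsum
    obtain ⟨rfl, hb⟩ := (inSigma_zero_iff hq b c).1 hy
    have hb₀ : b ≠ 0 := by simpa using hy₀
    obtain ⟨h₀, h₁, h₂⟩ := vec3_eq_add_iff.1 hsum
    obtain ⟨rfl, rfl, rfl⟩ : a' = 1 ∧ b' = B - b ∧ c' = C := by omega
    have := hB.2 hz
    omega
  refine ⟨hB.1, by simp, ?_⟩
  rintro ⟨y, z, ⟨hy, hy₀⟩, ⟨hz, hz₀⟩, hsum⟩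
  obtain ⟨a, b, c, rfl⟩ := exists_eq_vec3 y
  obtain ⟨a', b', c', rfl⟩ := exists_eq_vec3 z
  have ha := fst_nonneg_of_inSigma hq hy
  have ha' := fst_nonneg_of_inSigma hq hz
  have haa' : a + a' = 1 := by linarith [(vec3_eq_add_iff.1 hsum).1]
  rcases (show a = 0 ∨ a' = 0 by omega) with rfl | rfl
  · exact no_decomp_fst_zero b c a' b' c' hy hy₀ hz hsum
  · exact no_decomp_fst_zero b' c' a b c hz hz₀ hy (hsum.trans (add_comm _ _))

lemma isSigmaAtom_e₂ (hq : 0 < q) : IsSigmaAtom p q ![0, 1, 0] := by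
  refine ⟨(inSigma_zero_iff hq 1 0).2 ⟨rfl, zero_le_one⟩, by simp, ?_⟩
  rintro ⟨y, z, ⟨hy, hy₀⟩, ⟨hz, hz₀⟩, hsum⟩
  obtain ⟨a, b, c, rfl⟩ := exists_eq_vec3 y
  obtain ⟨a', b', c', rfl⟩ := exists_eq_vec3 z
  have ha := fst_nonneg_of_inSigma hq hy
  have ha' := fst_nonneg_of_inSigma hq hz
  obtain ⟨h₀, h₁, h₂⟩ := vec3_eq_add_iff.1 hsum
  obtain ⟨rfl, rfl⟩ : a = 0 ∧ a' = 0 := by omega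
  obtain ⟨rfl, hb⟩ := (inSigma_zero_iff hq b c).1 hy
  obtain ⟨rfl, hb'⟩ := (inSigma_zero_iff hq b' c').1 hz
  have hb₀ : b ≠ 0 := by simpa using hy₀
  have hb₀' : b' ≠ 0 := by simpa using hz₀
  omega

lemma isLeast_inSigma_e₁ (hq : 0 < q) : IsLeast {b | inSigma p q ![1, b, 0]} 0 := by
  refine ⟨(inSigma_iff hq 1 0 0).2 (by simp [hq.le]), fun b hb => ?_⟩
  obtain ⟨-, -, hb⟩ := (inSigma_iff hq 1 b 0).1 hb
  exact nonneg_of_mul_nonneg_right (by simpa using hb) hq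

lemma isLeast_inSigma_v₃ (hq : 0 < q) : IsLeast {b | inSigma p q ![1, b, q]} p := by
  refine ⟨(inSigma_iff hq 1 p q).2 ⟨hq.le, by simp, (mul_comm p q).le⟩, fun b hb => ?_⟩
  obtain ⟨-, -, hb⟩ := (inSigma_iff hq 1 b q).1 hb
  exact le_of_mul_le_mul_left (by linarith) hq

lemma IsSigmaAtom.mem (hq : 0 < q) {m : ℤ → ℤ}
    (hm : ∀ k, 1 ≤ k → k ≤ q - 1 → IsLeast {b | inSigma p q ![1, b, k]} (m k))
    {x : Fin 3 → ℤ} (hx : IsSigmaAtom p q x) :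
    x ∈ ({![1, 0, 0], ![0, 1, 0], ![1, p, q]} : Set (Fin 3 → ℤ)) ∪
      {x | ∃ k : ℤ, 1 ≤ k ∧ k ≤ q - 1 ∧ x = ![1, m k, k]} := by
  obtain ⟨a, b, c, rfl⟩ := exists_eq_vec3 x
  obtain ⟨hc₀, hca, hbc⟩ := (inSigma_iff hq a b c).1 hx.1
  have ha : 0 ≤ a := fst_nonneg_of_inSigma hq hx.1
  rcases (show c = 0 ∨ 1 ≤ c ∧ c ≤ q - 1 ∨ q ≤ c by omega) with rfl | ⟨hc₁, hc₂⟩ | hqc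
  · rcases ha.eq_or_lt with rfl | ha
    · obtain ⟨-, hb⟩ := (inSigma_zero_iff hq b 0).1 hx.1
      have hb₀ : b ≠ 0 := by simpa using hx.2.1
      refine Or.inl (Or.inr (Or.inl ?_))
      refine hx.eq_of_inSigma_sub ((inSigma_zero_iff hq 1 0).2 ⟨rfl, zero_le_one⟩) (by simp) ?_
      have hsub : ![0, b, 0] - ![0, 1, 0] = ![0, b - 1, 0] := by
        ext i; fin_cases i <;> simp
      rw [hsub, inSigma_zero_iff hq]
      omega
    · exact Or.inl (Or.inl (hx.eq_of_isLeast hq ha hq.le (isLeast_inSigma_e₁ hq)))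
  · have ha₁ : 1 ≤ a := by nlinarith
    exact Or.inr ⟨c, hc₁, hc₂, hx.eq_of_isLeast hq ha₁ (by omega) (hm c hc₁ hc₂)⟩
  · refine Or.inl (Or.inr (Or.inr ?_))
    refine hx.eq_of_inSigma_sub (isLeast_inSigma_v₃ hq).1 (by simp) ?_
    have hsub : ![a, b, c] - ![1, p, q] = ![a - 1, b - p, c - q] := by
      ext i; fin_cases i <;> simp
    rw [hsub, inSigma_iff hq]
    exact ⟨by omega, by linarith, by linarith⟩

end Sigma

theorem stmt_8 (p q : ℤ) (hp : 1 ≤ p) (hpq : p < q) (hgcd : Int.gcd p q = 1)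
    (m : ℤ → ℤ)
    (hm : ∀ k, 1 ≤ k → k ≤ q - 1 →
      0 < m k ∧ m k * q > k * p ∧ ∀ l : ℤ, 0 < l → l * q > k * p → m k ≤ l) :
    {x : Fin 3 → ℤ | inSigma p q x ∧ x ≠ 0 ∧
        ¬∃ y z : Fin 3 → ℤ, (inSigma p q y ∧ y ≠ 0) ∧ (inSigma p q z ∧ z ≠ 0) ∧
          x = y + z} =
      {![1, 0, 0], ![0, 1, 0], ![1, p, q]} ∪
        {x | ∃ k : ℤ, 1 ≤ k ∧ k ≤ q - 1 ∧ x = ![1, m k, k]} := by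
  have hq : 0 < q := by omega
  have hleast : ∀ k, 1 ≤ k → k ≤ q - 1 → IsLeast {b | inSigma p q ![1, b, k]} (m k) :=
    fun k hk₁ hk₂ => isLeast_inSigma_of_minimal (by omega) hq hgcd hk₁ hk₂
      (hm k hk₁ hk₂).2.1 (hm k hk₁ hk₂).2.2
  ext x
  refine ⟨fun hx => IsSigmaAtom.mem hq hleast hx, ?_⟩
  rintro ((rfl | rfl | rfl) | ⟨k, hk₁, hk₂, rfl⟩)
  · exact isSigmaAtom_of_isLeast hq (isLeast_inSigma_e₁ hq)
  · exact isSigmaAtom_e₂ hq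
  · exact isSigmaAtom_of_isLeast hq (isLeast_inSigma_v₃ hq)
  · exact isSigmaAtom_of_isLeast hq (hleast k hk₁ hk₂)
end
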